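/- arXiv:2602.15380 — 3 statements merged into one kernel-verified Lean document; each statement's English description precedes it below -/
import Mathlib

section
/- Let f : ℝ^d → ℝ be differentiable with an L-Lipschitz gradient (L > 0) and bounded below by f_inf, and let {Θ_t} satisfy Θ_{t+1} = Θ_t − α_t ∇f(Θ_t) with 0 ≤ α_t ≤ 2/L for all t. Then the sequence of objective values f(Θ_t) converges to a finite limit, and this limit is at least f_inf. -/
open Filter

/-!
An `L`-Lipschitz gradient gives the descent lemma
`f (x + v) ≤ f x + ⟪∇f x, v⟫ + L/2 ‖v‖²`. For the step `v = -α ∇f x` this yields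
`f (x - α ∇f x) ≤ f x - α (1 - Lα/2) ‖∇f x‖²`, and the decrease is nonnegative whenever
`0 ≤ α ≤ 2/L`. The objective values therefore form a nonincreasing sequence bounded below by
`f_inf`, which converges to its infimum.
-/

open scoped RealInnerProductSpace

section LipschitzGradient

variable {E : Type*} [NormedAddCommGroup E] [InnerProductSpace ℝ E] [CompleteSpace E]
  {f : E → ℝ} {g : E → E} {L : ℝ}

/-- The descent lemma. -/
theorem le_add_inner_add_sq_of_lipschitz_gradient (hgrad : ∀ x, HasGradientAt f (g x) x)
    (hlip : ∀ x y, ‖g x - g y‖ ≤ L * ‖x - y‖) (x v : E) :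
    f (x + v) ≤ f x + ⟪g x, v⟫ + L / 2 * ‖v‖ ^ 2 := by
  -- `φ` is the gap to the quadratic upper model along the segment; it is antitone on `[0, 1]`.
  set φ : ℝ → ℝ := fun s => f (x + s • v) - s * ⟪g x, v⟫ - L * s ^ 2 / 2 * ‖v‖ ^ 2
  have hφ' (s : ℝ) :
      HasDerivAt φ (⟪g (x + s • v) - g x, v⟫ - L * s * ‖v‖ ^ 2) s := by
    have hline : HasDerivAt (fun s : ℝ => x + s • v) v s := by
      simpa using ((hasDerivAt_id s).smul_const v).const_add x
    have hf : HasDerivAt (fun s : ℝ => f (x + s • v)) ⟪g (x + s • v), v⟫ s := by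
      have := (hgrad (x + s • v)).hasFDerivAt.comp_hasDerivAt s hline
      simp only [InnerProductSpace.toDual_apply_apply] at this
      exact this
    have hlin := (hasDerivAt_id s).mul_const ⟪g x, v⟫
    have hquad := (((hasDerivAt_pow 2 s).const_mul L).div_const 2).mul_const (‖v‖ ^ 2)
    exact ((hf.sub hlin).sub hquad).congr_deriv (by rw [inner_sub_left]; push_cast; ring)
  have hinner_le (s : ℝ) (hs : 0 ≤ s) : ⟪g (x + s • v) - g x, v⟫ ≤ L * s * ‖v‖ ^ 2 :=
    calc ⟪g (x + s • v) - g x, v⟫ ≤ ‖g (x + s • v) - g x‖ * ‖v‖ := real_inner_le_norm _ _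
      _ ≤ L * ‖(x + s • v) - x‖ * ‖v‖ := by gcongr; exact hlip _ _
      _ = L * s * ‖v‖ ^ 2 := by
        rw [add_sub_cancel_left, norm_smul, Real.norm_of_nonneg hs]; ring
  have hanti : AntitoneOn φ (Set.Icc 0 1) := by
    refine antitoneOn_of_deriv_nonpos (convex_Icc 0 1)
      (fun s _ => (hφ' s).continuousAt.continuousWithinAt)
      (fun s _ => (hφ' s).differentiableAt.differentiableWithinAt) fun s hs => ?_
    rw [interior_Icc] at hs
    rw [(hφ' s).deriv]
    linarith [hinner_le s hs.1.le]
  have h01 := hanti ⟨le_rfl, zero_le_one⟩ ⟨zero_le_one, le_rfl⟩ zero_le_one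
  simp only [φ, zero_smul, add_zero, one_smul, zero_mul, sub_zero, one_mul, one_pow, ne_eq,
    OfNat.ofNat_ne_zero, not_false_eq_true, zero_pow, mul_zero, zero_div] at h01
  linarith

theorem image_sub_smul_gradient_le (hgrad : ∀ x, HasGradientAt f (g x) x)
    (hlip : ∀ x y, ‖g x - g y‖ ≤ L * ‖x - y‖) (x : E) (a : ℝ) :
    f (x - a • g x) ≤ f x - a * (1 - L * a / 2) * ‖g x‖ ^ 2 := by
  have h := le_add_inner_add_sq_of_lipschitz_gradient hgrad hlip x (-(a • g x))
  rw [← sub_eq_add_neg, inner_neg_right, real_inner_smul_right, real_inner_self_eq_norm_sq,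
    norm_neg, norm_smul, mul_pow, Real.norm_eq_abs, sq_abs] at h
  linarith

theorem image_sub_smul_gradient_le_self (hgrad : ∀ x, HasGradientAt f (g x) x)
    (hlip : ∀ x y, ‖g x - g y‖ ≤ L * ‖x - y‖) (hL : 0 < L) (x : E) {a : ℝ}
    (ha0 : 0 ≤ a) (ha2 : a ≤ 2 / L) :
    f (x - a • g x) ≤ f x := by
  have hLa : L * a ≤ 2 := by rwa [le_div_iff₀' hL] at ha2
  have hdecrease : 0 ≤ a * (1 - L * a / 2) * ‖g x‖ ^ 2 := by
    have : 0 ≤ 1 - L * a / 2 := by linarith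
    positivity
  linarith [image_sub_smul_gradient_le hgrad hlip x a]

theorem antitone_image_of_gradient_iteration (hgrad : ∀ x, HasGradientAt f (g x) x)
    (hlip : ∀ x y, ‖g x - g y‖ ≤ L * ‖x - y‖) (hL : 0 < L) {Θ : ℕ → E} {α : ℕ → ℝ}
    (hiter : ∀ t, Θ (t + 1) = Θ t - α t • g (Θ t))
    (hα0 : ∀ t, 0 ≤ α t) (hα2 : ∀ t, α t ≤ 2 / L) :
    Antitone fun t => f (Θ t) :=
  antitone_nat_of_succ_le fun t => by
    rw [hiter]
    exact image_sub_smul_gradient_le_self hgrad hlip hL (Θ t) (hα0 t) (hα2 t)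

end LipschitzGradient

/-- **Convergence of objective values.**
For the gradient iteration with `0 ≤ α t ≤ 2/L` on an `L`-smooth objective bounded
below by `f_inf`, the objective values `f (Θ t)` converge to a finite limit, and the
limit is at least `f_inf`. -/
theorem objective_values_converge
    (d : ℕ) (f : EuclideanSpace ℝ (Fin d) → ℝ)
    (g : EuclideanSpace ℝ (Fin d) → EuclideanSpace ℝ (Fin d))
    (L f_inf : ℝ) (hL : 0 < L)
    (hgrad : ∀ x, HasGradientAt f (g x) x)
    (hlip : ∀ x y, ‖g x - g y‖ ≤ L * ‖x - y‖)
    (hbdd : ∀ x, f_inf ≤ f x)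
    (Θ : ℕ → EuclideanSpace ℝ (Fin d)) (α : ℕ → ℝ)
    (hiter : ∀ t, Θ (t + 1) = Θ t - α t • g (Θ t))
    (hα0 : ∀ t, 0 ≤ α t) (hα2 : ∀ t, α t ≤ 2 / L) :
    ∃ c : ℝ, Tendsto (fun t => f (Θ t)) atTop (nhds c) ∧ f_inf ≤ c := by
  have hanti := antitone_image_of_gradient_iteration hgrad hlip hL hiter hα0 hα2
  have hbdd_below : BddBelow (Set.range fun t => f (Θ t)) :=
    ⟨f_inf, by rintro _ ⟨t, rfl⟩; exact hbdd _⟩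
  exact ⟨⨅ t, f (Θ t), tendsto_atTop_ciInf hanti hbdd_below, le_ciInf fun t => hbdd _⟩
end

section
/- Let f : ℝ^d → ℝ be differentiable with an L-Lipschitz gradient (L > 0) and bounded below by f_inf, and let {Θ_t} satisfy Θ_{t+1} = Θ_t − α_t ∇f(Θ_t) with 0 ≤ α_t ≤ 2/L for all t. Define κ_t = α_t − (L/2)α_t². Then κ_t ‖∇f(Θ_t)‖² → 0 as t → ∞. -/
/-!
Along the segment `s ↦ x + s • v` the derivative of `f` differs from `⟪∇f x, v⟫` by at most
`L s ‖v‖²`, which integrates to the descent lemma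
`f (x + v) ≤ f x + ⟪∇f x, v⟫ + (L/2) ‖v‖²`. For the step `v = -α_t ∇f(Θ_t)` it says that each
iteration decreases `f` by at least `κ_t ‖∇f(Θ_t)‖² ≥ 0`; since `f` is bounded below these
decreases telescope to a convergent series, whose terms tend to zero.
-/

open Filter

section Descent

variable {E : Type*} [NormedAddCommGroup E] [InnerProductSpace ℝ E] {f : E → ℝ} {g : E → E} {L : ℝ}

lemma inner_sub_inner_le_of_lipschitz (hlip : ∀ x y, ‖g x - g y‖ ≤ L * ‖x - y‖)
    (x v : E) {s : ℝ} (hs : 0 ≤ s) :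
    inner ℝ (g (x + s • v)) v - inner ℝ (g x) v ≤ L * s * ‖v‖ ^ 2 := by
  have hgs : ‖g (x + s • v) - g x‖ ≤ L * (s * ‖v‖) := by
    simpa [norm_smul, abs_of_nonneg hs] using hlip (x + s • v) x
  calc inner ℝ (g (x + s • v)) v - inner ℝ (g x) v
      = inner ℝ (g (x + s • v) - g x) v := (inner_sub_left _ _ _).symm
    _ ≤ ‖g (x + s • v) - g x‖ * ‖v‖ := real_inner_le_norm _ _
    _ ≤ L * (s * ‖v‖) * ‖v‖ := mul_le_mul_of_nonneg_right hgs (norm_nonneg v)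
    _ = L * s * ‖v‖ ^ 2 := by ring

variable [CompleteSpace E]

lemma hasDerivAt_comp_add_smul_of_hasGradientAt (hgrad : ∀ x, HasGradientAt f (g x) x)
    (x v : E) (s : ℝ) :
    HasDerivAt (fun s : ℝ => f (x + s • v)) (inner ℝ (g (x + s • v)) v) s := by
  have hline : HasDerivAt (fun s : ℝ => x + s • v) v s := by
    simpa using ((hasDerivAt_id s).smul_const v).const_add x
  have h := (hgrad (x + s • v)).hasFDerivAt.comp_hasDerivAt s hline
  simp only [InnerProductSpace.toDual_apply_apply] at h
  exact h

lemma apply_add_le_of_lipschitz_gradient (hgrad : ∀ x, HasGradientAt f (g x) x)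
    (hlip : ∀ x y, ‖g x - g y‖ ≤ L * ‖x - y‖) (x v : E) :
    f (x + v) ≤ f x + inner ℝ (g x) v + L / 2 * ‖v‖ ^ 2 := by
  set φ : ℝ → ℝ := fun s => f (x + s • v) - s * inner ℝ (g x) v - L / 2 * s ^ 2 * ‖v‖ ^ 2
  have hφ : ∀ s, HasDerivAt φ
      (inner ℝ (g (x + s • v)) v - inner ℝ (g x) v - L * s * ‖v‖ ^ 2) s := fun s => by
    have hlin : HasDerivAt (fun s : ℝ => s * inner ℝ (g x) v) (inner ℝ (g x) v) s := by
      simpa using (hasDerivAt_id s).mul_const (inner ℝ (g x) v)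
    have hquad : HasDerivAt (fun s : ℝ => L / 2 * s ^ 2 * ‖v‖ ^ 2) (L * s * ‖v‖ ^ 2) s :=
      (((hasDerivAt_pow 2 s).const_mul (L / 2)).mul_const (‖v‖ ^ 2)).congr_deriv (by ring)
    exact ((hasDerivAt_comp_add_smul_of_hasGradientAt hgrad x v s).sub hlin).sub hquad
  have hanti : AntitoneOn φ (Set.Icc 0 1) := by
    refine antitoneOn_of_deriv_nonpos (convex_Icc 0 1)
      (fun s _ => (hφ s).continuousAt.continuousWithinAt)
      (fun s _ => (hφ s).differentiableAt.differentiableWithinAt) fun s hs => ?_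
    rw [interior_Icc] at hs
    rw [(hφ s).deriv]
    linarith [inner_sub_inner_le_of_lipschitz hlip x v hs.1.le]
  have h01 : φ 1 ≤ φ 0 := hanti (by norm_num) (by norm_num) zero_le_one
  simp only [φ, one_smul, zero_smul, add_zero, one_pow, one_mul, zero_mul, zero_pow,
    ne_eq, OfNat.ofNat_ne_zero, not_false_eq_true, mul_zero, sub_zero] at h01
  linarith

lemma apply_sub_smul_le_of_lipschitz_gradient (hgrad : ∀ x, HasGradientAt f (g x) x)
    (hlip : ∀ x y, ‖g x - g y‖ ≤ L * ‖x - y‖) (x : E) (α : ℝ) :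
    f (x - α • g x) ≤ f x - (α - L / 2 * α ^ 2) * ‖g x‖ ^ 2 := by
  have h := apply_add_le_of_lipschitz_gradient hgrad hlip x (-(α • g x))
  rw [← sub_eq_add_neg, inner_neg_right, real_inner_smul_right, real_inner_self_eq_norm_sq,
    norm_neg, norm_smul, mul_pow, Real.norm_eq_abs, sq_abs] at h
  linarith

end Descent

lemma half_mul_sq_le_of_le_two_div {L α : ℝ} (hα : 0 ≤ α) (h : α ≤ 2 / L) :
    L / 2 * α ^ 2 ≤ α := by
  rcases le_or_gt L 0 with hL | hL
  · nlinarith [sq_nonneg α]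
  · have hLα : α * L ≤ 2 := (le_div_iff₀ hL).1 h
    nlinarith

lemma summable_of_le_sub_succ_of_bddBelow {a b : ℕ → ℝ} {m : ℝ} (hb : ∀ t, 0 ≤ b t)
    (hba : ∀ t, b t ≤ a t - a (t + 1)) (ha : ∀ t, m ≤ a t) : Summable b :=
  summable_of_sum_range_le hb fun n => calc
    ∑ i ∈ Finset.range n, b i ≤ ∑ i ∈ Finset.range n, (a i - a (i + 1)) :=
      Finset.sum_le_sum fun i _ => hba i
    _ = a 0 - a n := Finset.sum_range_sub' a n
    _ ≤ a 0 - m := by linarith [ha n]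

theorem weighted_grad_norms_tendsto_zero_general
    (d : ℕ) (f : EuclideanSpace ℝ (Fin d) → ℝ)
    (g : EuclideanSpace ℝ (Fin d) → EuclideanSpace ℝ (Fin d))
    (L f_inf : ℝ)
    (hgrad : ∀ x, HasGradientAt f (g x) x)
    (hlip : ∀ x y, ‖g x - g y‖ ≤ L * ‖x - y‖)
    (hbdd : ∀ x, f_inf ≤ f x)
    (Θ : ℕ → EuclideanSpace ℝ (Fin d)) (α : ℕ → ℝ)
    (hiter : ∀ t, Θ (t + 1) = Θ t - α t • g (Θ t))
    (hα0 : ∀ t, 0 ≤ α t) (hα2 : ∀ t, α t ≤ 2 / L) :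
    Tendsto (fun t => (α t - L / 2 * (α t) ^ 2) * ‖g (Θ t)‖ ^ 2) atTop (nhds 0) := by
  have hκ : ∀ t, 0 ≤ α t - L / 2 * α t ^ 2 := fun t =>
    sub_nonneg.2 (half_mul_sq_le_of_le_two_div (hα0 t) (hα2 t))
  have hdecrease : ∀ t, (α t - L / 2 * α t ^ 2) * ‖g (Θ t)‖ ^ 2 ≤ f (Θ t) - f (Θ (t + 1)) :=
    fun t => by linarith [hiter t ▸ apply_sub_smul_le_of_lipschitz_gradient hgrad hlip (Θ t) (α t)]
  exact (summable_of_le_sub_succ_of_bddBelow (fun t => mul_nonneg (hκ t) (sq_nonneg _))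
    hdecrease fun t => hbdd (Θ t)).tendsto_atTop_zero

/-- **Vanishing of the weighted squared gradient norms.**
For the gradient iteration with `0 ≤ α t ≤ 2/L` on an `L`-smooth objective bounded
below by `f_inf`, with `κ t = α t - (L/2) (α t)²`, we have
`κ t ‖g (Θ t)‖² → 0` as `t → ∞`. -/
theorem weighted_grad_norms_tendsto_zero
    (d : ℕ) (f : EuclideanSpace ℝ (Fin d) → ℝ)
    (g : EuclideanSpace ℝ (Fin d) → EuclideanSpace ℝ (Fin d))
    (L f_inf : ℝ) (hL : 0 < L)
    (hgrad : ∀ x, HasGradientAt f (g x) x)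
    (hlip : ∀ x y, ‖g x - g y‖ ≤ L * ‖x - y‖)
    (hbdd : ∀ x, f_inf ≤ f x)
    (Θ : ℕ → EuclideanSpace ℝ (Fin d)) (α : ℕ → ℝ)
    (hiter : ∀ t, Θ (t + 1) = Θ t - α t • g (Θ t))
    (hα0 : ∀ t, 0 ≤ α t) (hα2 : ∀ t, α t ≤ 2 / L) :
    Tendsto (fun t => (α t - L / 2 * (α t) ^ 2) * ‖g (Θ t)‖ ^ 2) atTop (nhds 0) :=
  weighted_grad_norms_tendsto_zero_general d f g L f_inf hgrad hlip hbdd Θ α hiter hα0 hα2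
end

section
/- Let f : ℝ^d → ℝ be differentiable with an L-Lipschitz gradient (L > 0) and bounded below by f_inf, and let {Θ_t} satisfy Θ_{t+1} = Θ_t − α_t ∇f(Θ_t) with 0 < α_min ≤ α_t ≤ ᾱ < 2/L for all t. Then the squared gradient norms are summable, ∑_{t=0}^{∞} ‖∇f(Θ_t)‖² < ∞, and consequently ‖∇f(Θ_t)‖ → 0 as t → ∞. -/
/-!
The descent lemma `f (x + v) ≤ f x + ⟪∇f x, v⟫ + L/2 ‖v‖²` turns each gradient step into the
decrease `f Θ_{t+1} ≤ f Θ_t - α_t (1 - L α_t / 2) ‖∇f Θ_t‖²`, and the factor is at least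
`κ = α_min (1 - L ᾱ / 2) > 0`. Summing telescopes, so the partial sums of `κ ‖∇f Θ_t‖²` are
bounded by `f Θ_0 - f_inf`.
-/

open Filter

section Descent

variable {E : Type*} [NormedAddCommGroup E] [InnerProductSpace ℝ E]
  {f : E → ℝ} {g : E → E} {L : ℝ}

theorem HasGradientAt.hasDerivAt_comp_add_smul [CompleteSpace E] {x v : E} {s : ℝ}
    (hf : HasGradientAt f (g (x + s • v)) (x + s • v)) :
    HasDerivAt (fun s : ℝ => f (x + s • v)) (inner ℝ (g (x + s • v)) v) s := by
  have hline : HasDerivAt (fun s : ℝ => x + s • v) v s := by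
    simpa using ((hasDerivAt_id s).smul_const v).const_add x
  have h := hf.hasFDerivAt.comp_hasDerivAt s hline
  rw [InnerProductSpace.toDual_apply_apply] at h
  exact h

theorem inner_gradient_sub_le (hlip : ∀ x y, ‖g x - g y‖ ≤ L * ‖x - y‖)
    (x v : E) {s : ℝ} (hs : 0 ≤ s) :
    inner ℝ (g (x + s • v) - g x) v ≤ L * s * ‖v‖ ^ 2 :=
  calc inner ℝ (g (x + s • v) - g x) v ≤ ‖g (x + s • v) - g x‖ * ‖v‖ := real_inner_le_norm _ _
    _ ≤ L * ‖x + s • v - x‖ * ‖v‖ := by gcongr; exact hlip _ _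
    _ = L * s * ‖v‖ ^ 2 := by
      rw [add_sub_cancel_left, norm_smul, Real.norm_of_nonneg hs]; ring

theorem descent_lemma [CompleteSpace E] (hgrad : ∀ x, HasGradientAt f (g x) x)
    (hlip : ∀ x y, ‖g x - g y‖ ≤ L * ‖x - y‖) (x v : E) :
    f (x + v) ≤ f x + inner ℝ (g x) v + L / 2 * ‖v‖ ^ 2 := by
  -- `gap` is the slack of the quadratic bound along the segment: it vanishes at `0` and the
  -- Lipschitz bound on `g` makes its derivative nonnegative.
  set gap : ℝ → ℝ := fun s => f x + s * inner ℝ (g x) v + s ^ 2 * (L / 2 * ‖v‖ ^ 2) - f (x + s • v)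
  have hgap : ∀ s : ℝ, HasDerivAt gap
      (2 * s * (L / 2 * ‖v‖ ^ 2) - inner ℝ (g (x + s • v) - g x) v) s := by
    intro s
    have hquad := (((hasDerivAt_id s).mul_const (inner ℝ (g x) v)).const_add (f x)).add
      ((hasDerivAt_pow 2 s).mul_const (L / 2 * ‖v‖ ^ 2))
    have hline := (hgrad (x + s • v)).hasDerivAt_comp_add_smul
    exact (hquad.sub hline).congr_deriv (by rw [inner_sub_left]; ring)
  have hmono : MonotoneOn gap (Set.Icc 0 1) := by
    refine monotoneOn_of_hasDerivWithinAt_nonneg (convex_Icc 0 1)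
      (fun s _ => (hgap s).continuousAt.continuousWithinAt)
      (fun s _ => (hgap s).hasDerivWithinAt) fun s hs => ?_
    rw [interior_Icc] at hs
    have := inner_gradient_sub_le hlip x v hs.1.le
    linarith
  have h01 := hmono (by simp) (by simp) zero_le_one
  norm_num [gap] at h01
  linarith

theorem gradient_step_decrease [CompleteSpace E] (hgrad : ∀ x, HasGradientAt f (g x) x)
    (hlip : ∀ x y, ‖g x - g y‖ ≤ L * ‖x - y‖) (x : E) (a : ℝ) :
    f (x - a • g x) ≤ f x - a * (1 - L / 2 * a) * ‖g x‖ ^ 2 := by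
  have h := descent_lemma hgrad hlip x (-(a • g x))
  rw [← sub_eq_add_neg, inner_neg_right, real_inner_smul_right, real_inner_self_eq_norm_sq,
    norm_neg, norm_smul, Real.norm_eq_abs, mul_pow, sq_abs] at h
  linarith

end Descent

theorem summable_of_le_sub_succ {b u : ℕ → ℝ} {m : ℝ} (hb : ∀ t, 0 ≤ b t)
    (hdec : ∀ t, b t ≤ u t - u (t + 1)) (hm : ∀ t, m ≤ u t) : Summable b :=
  summable_of_sum_range_le hb fun n =>
    calc ∑ t ∈ Finset.range n, b t ≤ ∑ t ∈ Finset.range n, (u t - u (t + 1)) :=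
          Finset.sum_le_sum fun t _ => hdec t
      _ = u 0 - u n := Finset.sum_range_sub' u n
      _ ≤ u 0 - m := by linarith [hm n]

theorem step_factor_le {L αmin ᾱ a : ℝ} (hL : 0 ≤ L) (hαmin : 0 ≤ αmin) (hbar : L / 2 * ᾱ ≤ 1)
    (hlow : αmin ≤ a) (hhigh : a ≤ ᾱ) :
    αmin * (1 - L / 2 * ᾱ) ≤ a * (1 - L / 2 * a) := by
  have : L / 2 * a ≤ L / 2 * ᾱ := by gcongr
  exact mul_le_mul hlow (by linarith) (by linarith) (hαmin.trans hlow)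

theorem grad_norms_summable_and_vanish_general
    (d : ℕ) (f : EuclideanSpace ℝ (Fin d) → ℝ)
    (g : EuclideanSpace ℝ (Fin d) → EuclideanSpace ℝ (Fin d))
    (L f_inf : ℝ)
    (hgrad : ∀ x, HasGradientAt f (g x) x)
    (hlip : ∀ x y, ‖g x - g y‖ ≤ L * ‖x - y‖)
    (hbdd : ∀ x, f_inf ≤ f x)
    (Θ : ℕ → EuclideanSpace ℝ (Fin d)) (α : ℕ → ℝ) (αmin ᾱ : ℝ)
    (hiter : ∀ t, Θ (t + 1) = Θ t - α t • g (Θ t))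
    (hαmin : 0 < αmin) (hlow : ∀ t, αmin ≤ α t) (hhigh : ∀ t, α t ≤ ᾱ)
    (hbar : ᾱ < 2 / L) :
    Summable (fun t => ‖g (Θ t)‖ ^ 2) ∧
      Tendsto (fun t => ‖g (Θ t)‖) atTop (nhds 0) := by
  have hᾱ : 0 < ᾱ := hαmin.trans_le ((hlow 0).trans (hhigh 0))
  -- otherwise `2 / L ≤ 0 < ᾱ`, also for the junk value `2 / 0 = 0`
  have hL : 0 < L := lt_of_not_ge fun h =>
    (hbar.trans_le (div_nonpos_of_nonneg_of_nonpos zero_le_two h)).not_gt hᾱ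
  have hbar' : L / 2 * ᾱ < 1 := by
    rw [lt_div_iff₀ hL] at hbar; linarith
  have hκ : 0 < αmin * (1 - L / 2 * ᾱ) := mul_pos hαmin (by linarith)
  have hdec : ∀ t, αmin * (1 - L / 2 * ᾱ) * ‖g (Θ t)‖ ^ 2 ≤ f (Θ t) - f (Θ (t + 1)) := fun t => by
    have hstep := gradient_step_decrease hgrad hlip (Θ t) (α t)
    rw [← hiter] at hstep
    have := mul_le_mul_of_nonneg_right (step_factor_le hL.le hαmin.le hbar'.le (hlow t) (hhigh t))
      (sq_nonneg ‖g (Θ t)‖)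
    linarith
  have hsum : Summable fun t => ‖g (Θ t)‖ ^ 2 :=
    (summable_mul_left_iff hκ.ne').mp <|
      summable_of_le_sub_succ (fun t => by positivity) hdec fun t => hbdd (Θ t)
  refine ⟨hsum, ?_⟩
  simpa [Real.sqrt_sq (norm_nonneg _)] using hsum.tendsto_atTop_zero.sqrt

/-- **Summability of squared gradient norms and vanishing gradients.**
For the gradient iteration with `0 < αmin ≤ α t ≤ ᾱ < 2/L` on an `L`-smooth objective
bounded below, the squared gradient norms are summable and hence `‖g (Θ t)‖ → 0`. -/
theorem grad_norms_summable_and_vanish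
    (d : ℕ) (f : EuclideanSpace ℝ (Fin d) → ℝ)
    (g : EuclideanSpace ℝ (Fin d) → EuclideanSpace ℝ (Fin d))
    (L f_inf : ℝ) (hL : 0 < L)
    (hgrad : ∀ x, HasGradientAt f (g x) x)
    (hlip : ∀ x y, ‖g x - g y‖ ≤ L * ‖x - y‖)
    (hbdd : ∀ x, f_inf ≤ f x)
    (Θ : ℕ → EuclideanSpace ℝ (Fin d)) (α : ℕ → ℝ) (αmin ᾱ : ℝ)
    (hiter : ∀ t, Θ (t + 1) = Θ t - α t • g (Θ t))
    (hαmin : 0 < αmin) (hlow : ∀ t, αmin ≤ α t) (hhigh : ∀ t, α t ≤ ᾱ)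
    (hbar : ᾱ < 2 / L) :
    Summable (fun t => ‖g (Θ t)‖ ^ 2) ∧
      Tendsto (fun t => ‖g (Θ t)‖) atTop (nhds 0) :=
  grad_norms_summable_and_vanish_general d f g L f_inf hgrad hlip hbdd Θ α αmin ᾱ hiter hαmin hlow
    hhigh hbar
end
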